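/- Let ρ be a congruence on the monoid M presented by ⟨x, y, e | e³ = e, xey = y, xe²y = x, xy = 1⟩. If there exists u ∈ M with u ρ (u·y⁴), then ρ is the universal congruence M × M. -/
import Mathlib


/-- The alphabet `A = {x, y, e}`. -/
inductive Alpha : Type
  | x | y | e
  deriving DecidableEq

/-- The defining relations `e³ = e`, `xey = y`, `xe²y = x`, `xy = 1`. -/
def rel : FreeMonoid Alpha → FreeMonoid Alpha → Prop := fun a b =>
  (a = .of .e * .of .e * .of .e ∧ b = .of .e) ∨
  (a = .of .x * .of .e * .of .y ∧ b = .of .y) ∨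
  (a = .of .x * .of .e * .of .e * .of .y ∧ b = .of .x) ∨
  (a = .of .x * .of .y ∧ b = 1)

/-- The monoid `M = ⟨x, y, e | e³ = e, xey = y, xe²y = x, xy = 1⟩`. -/
abbrev M := PresentedMonoid rel

/-- The image of `x` in `M`. -/
def X : M := PresentedMonoid.of rel .x
/-- The image of `y` in `M`. -/
def Y : M := PresentedMonoid.of rel .y
/-- The image of `e` in `M`. -/
def E : M := PresentedMonoid.of rel .e


lemma sound {a b : FreeMonoid Alpha} (h : rel a b) : PresentedMonoid.mk rel a = PresentedMonoid.mk rel b :=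
  Quotient.sound (ConGen.Rel.of a b h)

lemma hXY : X * Y = 1 := sound (Or.inr (Or.inr (Or.inr ⟨rfl, rfl⟩)))
lemma hXEY : X * E * Y = Y := sound (Or.inr (Or.inl ⟨rfl, rfl⟩))
lemma hXE2Y : X * E * E * Y = X := sound (Or.inr (Or.inr (Or.inl ⟨rfl, rfl⟩)))
lemma hE3 : E * E * E = E := sound (Or.inl ⟨rfl, rfl⟩)

-- contextual versions
lemma cXY (t : M) : X * (Y * t) = t := by rw [← mul_assoc, hXY, one_mul]
lemma cXEY (t : M) : X * (E * (Y * t)) = Y * t := by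
  rw [← mul_assoc, ← mul_assoc, hXEY]
lemma cXE2Y (t : M) : X * (E * (E * (Y * t))) = X * t := by
  rw [← mul_assoc, ← mul_assoc, ← mul_assoc, hXE2Y]
lemma cE3 (t : M) : E * (E * (E * t)) = E * t := by
  rw [← mul_assoc, ← mul_assoc, hE3]

def m (w : List Alpha) : M := PresentedMonoid.mk rel (FreeMonoid.ofList w)

lemma m_nil : m [] = 1 := rfl
lemma m_cons (g : Alpha) (t : List Alpha) : m (g :: t) = PresentedMonoid.of rel g * m t := rfl
lemma m_consx (t : List Alpha) : m (.x :: t) = X * m t := rfl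
lemma m_consy (t : List Alpha) : m (.y :: t) = Y * m t := rfl
lemma m_conse (t : List Alpha) : m (.e :: t) = E * m t := rfl

/-- H : left multiplication by X sends a no-x word into a no-x word (after enough Y's). -/
theorem lemH : ∀ (a : List Alpha), Alpha.x ∉ a →
    ∃ (k : ℕ) (b : List Alpha), Alpha.x ∉ b ∧ X * m a * Y ^ k = m b
  | [], _ => ⟨1, [], by simp, by simp [m_nil, pow_one, hXY]⟩
  | .x :: t, h => by simp at h
  | .y :: t, h => ⟨0, t, by simpa using h, by simp [m_consy, cXY]⟩
  | [.e], _ => ⟨1, [.y], by simp, by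
      simp only [m_conse, m_consy, m_nil, pow_one, mul_one]
      exact hXEY⟩
  | .e :: .x :: t, h => by simp at h
  | .e :: .y :: t, h => ⟨0, .y :: t, by simpa using h, by
      simp [m_conse, m_consy, mul_assoc, cXEY]⟩
  | [.e, .e], _ => ⟨2, [], by simp, by
      simp [m_conse, m_nil, mul_assoc, pow_succ, pow_one]
      rw [cXE2Y, hXY]⟩
  | .e :: .e :: .x :: t, h => by simp at h
  | .e :: .e :: .y :: t, h => by
      have ht : Alpha.x ∉ t := by simp at h; tauto
      obtain ⟨k, b, hb, hk⟩ := lemH t ht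
      exact ⟨k, b, hb, by
        simp only [m_conse, m_consy, mul_assoc]
        rw [cXE2Y, ← mul_assoc, hk]⟩
  | .e :: .e :: .e :: t, h => by
      have ht : Alpha.x ∉ (.e :: t : List Alpha) := by simp at h ⊢; tauto
      obtain ⟨k, b, hb, hk⟩ := lemH (.e :: t) ht
      exact ⟨k, b, hb, by
        simp only [m_conse, mul_assoc] at hk ⊢
        rw [cE3]; exact hk⟩

lemma dXEY (t : M) : X * (E * Y) = Y := by rw [← mul_assoc]; exact hXEY

lemma padL {p q : ℕ} {u : M} (h : X ^ p * u * Y ^ q = 1) :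
    X ^ (p+1) * u * Y ^ (q+1) = 1 := by
  rw [pow_succ' X, pow_succ Y]
  have : X * X ^ p * u * (Y ^ q * Y) = X * (X ^ p * u * Y ^ q) * Y := by
    simp [mul_assoc]
  rw [this, h, mul_one, hXY]

theorem lemL : ∀ (a : List Alpha), Alpha.x ∉ a →
    ∃ p q : ℕ, X ^ p * m a * Y ^ q = 1
  | [], _ => ⟨0, 0, by simp [m_nil]⟩
  | .x :: t, h => by simp at h
  | .y :: t, h => by
      have ht : Alpha.x ∉ t := by simp at h; tauto
      obtain ⟨p, q, hpq⟩ := lemL t ht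
      refine ⟨p + 1, q, ?_⟩
      rw [m_consy, pow_succ, mul_assoc (X ^ p) X, cXY]
      exact hpq
  | [.e], _ => ⟨2, 1, by
      rw [m_conse, m_nil, mul_one, pow_one, pow_two]
      have : X * X * E * Y = X * (X * E * Y) := by simp [mul_assoc]
      rw [this, hXEY, hXY]⟩
  | .e :: .x :: t, h => by simp at h
  | .e :: .y :: t, h => by
      have ht : Alpha.x ∉ t := by simp at h; tauto
      obtain ⟨p, q, hpq⟩ := lemL t ht
      refine ⟨p + 2, q, ?_⟩
      rw [m_conse, m_consy]
      simp only [pow_add, pow_two, mul_assoc]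
      rw [cXEY, cXY, ← mul_assoc]
      exact hpq
  | [.e, .e], _ => ⟨1, 2, by
      rw [m_conse, m_conse, m_nil, mul_one, pow_one, pow_two]
      have : X * (E * E) * (Y * Y) = X * (E * (E * (Y * Y))) := by simp [mul_assoc]
      rw [this, cXE2Y, hXY]⟩
  | .e :: .e :: .x :: t, h => by simp at h
  | .e :: .e :: .y :: t, h => by
      have ht : Alpha.x ∉ t := by simp at h; tauto
      obtain ⟨p, q, hpq⟩ := lemL t ht
      refine ⟨p + 1, q + 1, ?_⟩
      have : X ^ (p+1) * m (.e :: .e :: .y :: t) * Y ^ (q+1)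
           = X ^ p * (X * (E * (E * (Y * m t)))) * Y ^ (q+1) := by
        rw [m_conse, m_conse, m_consy, pow_succ, mul_assoc (X ^ p)]
      rw [this, cXE2Y, ← mul_assoc, ← pow_succ]
      exact padL hpq
  | .e :: .e :: .e :: t, h => by
      have ht : Alpha.x ∉ (.e :: t : List Alpha) := by simp at h ⊢; tauto
      obtain ⟨p, q, hpq⟩ := lemL (.e :: t) ht
      refine ⟨p, q, ?_⟩
      rw [m_conse, m_conse, m_conse, cE3, ← m_conse]
      exact hpq

theorem lemG : ∀ (w : List Alpha), ∃ (b : ℕ) (a : List Alpha),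
    Alpha.x ∉ a ∧ m w * Y ^ b = m a
  | [] => ⟨0, [], by simp, by simp [m_nil]⟩
  | .y :: t => by
      obtain ⟨b, a, ha, hb⟩ := lemG t
      exact ⟨b, .y :: a, by simpa using ha, by rw [m_consy, mul_assoc, hb, ← m_consy]⟩
  | .e :: t => by
      obtain ⟨b, a, ha, hb⟩ := lemG t
      exact ⟨b, .e :: a, by simpa using ha, by rw [m_conse, mul_assoc, hb, ← m_conse]⟩
  | .x :: t => by
      obtain ⟨b, a, ha, hb⟩ := lemG t
      obtain ⟨k, c, hc, hk⟩ := lemH a ha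
      refine ⟨b + k, c, hc, ?_⟩
      rw [m_consx, pow_add, ← mul_assoc, mul_assoc X (m t) (Y ^ b), hb, hk]

theorem mainlem : ∀ u : M, ∃ p q : ℕ, X ^ p * u * Y ^ q = 1 := by
  intro u
  induction u using PresentedMonoid.inductionOn with
  | h w =>
    obtain ⟨b, a, ha, hb⟩ := lemG (FreeMonoid.toList w)
    obtain ⟨p, q, hpq⟩ := lemL a ha
    refine ⟨p, b + q, ?_⟩
    have hm : m (FreeMonoid.toList w) = PresentedMonoid.mk rel w := by
      simp [m, FreeMonoid.ofList_toList]
    rw [← hm, pow_add, ← mul_assoc, mul_assoc (X ^ p) _ (Y ^ b), hb]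
    exact hpq

/-- If some `u ∈ M` satisfies `u ρ u·y⁴`, then `ρ` is universal. -/
theorem stmt_17 : ∀ ρ : Con M, (∃ u : M, ρ u (u * Y ^ 4)) → ρ = ⊤ := by
  intro ρ ⟨u, hu⟩
  obtain ⟨p, q, hpq⟩ := mainlem u
  have h1 : ρ 1 (Y ^ 4) := by
    have h := ρ.mul (ρ.mul (ρ.refl (X ^ p)) hu) (ρ.refl (Y ^ q))
    rw [hpq] at h
    have e2 : X ^ p * (u * Y ^ 4) * Y ^ q = Y ^ 4 := by
      calc X ^ p * (u * Y ^ 4) * Y ^ q = X ^ p * u * (Y ^ 4 * Y ^ q) := by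
            simp [mul_assoc]
        _ = X ^ p * u * (Y ^ q * Y ^ 4) := by rw [← pow_add, ← pow_add, add_comm]
        _ = (X ^ p * u * Y ^ q) * Y ^ 4 := by simp [mul_assoc]
        _ = Y ^ 4 := by rw [hpq, one_mul]
    rw [e2] at h; exact h
  have h1' : ρ 1 (Y * (Y * (Y * Y))) := by
    have := h1
    simp only [show (4:ℕ) = 3+1 from rfl, show (3:ℕ) = 2+1 from rfl,
      show (2:ℕ) = 1+1 from rfl, pow_succ, pow_one, mul_assoc] at this
    exact this
  have h2 : ρ X (Y * (Y * Y)) := by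
    have h := ρ.mul (ρ.refl X) h1'
    rw [mul_one, cXY] at h; exact h
  have h3 : ρ (Y * X) 1 := by
    have h := ρ.mul (ρ.refl Y) h2
    exact ρ.trans h (ρ.symm h1')
  have h4 : ρ (Y * (Y * X)) Y := by
    have h := ρ.mul (ρ.refl Y) h3
    rw [mul_one] at h; exact h
  have h5 : ρ (Y * (Y * X)) E := by
    have h := ρ.mul (ρ.mul h3 (ρ.refl E)) h3
    rw [one_mul, mul_one] at h
    have e : (Y * X) * E * (Y * X) = Y * (Y * X) := by
      rw [mul_assoc (Y * X) E, mul_assoc Y X, cXEY]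
    rw [e] at h; exact h
  have h6 : ρ E Y := ρ.trans (ρ.symm h5) h4
  have h7 : ρ E (Y * (Y * Y)) := by
    have h := ρ.mul h6 (ρ.mul h6 h6)
    have e : E * (E * E) = E := by rw [← mul_assoc, hE3]
    rw [e] at h; exact h
  have h8 : ρ Y (Y * (Y * Y)) := ρ.trans (ρ.symm h6) h7
  have h9 : ρ 1 (Y * Y) := by
    have h := ρ.mul (ρ.refl X) h8
    rw [hXY, cXY] at h; exact h
  have h10 : ρ (Y * (Y * Y)) Y := by
    have h := ρ.mul (ρ.refl Y) (ρ.symm h9)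
    rw [mul_one] at h; exact h
  have h11 : ρ X Y := ρ.trans h2 h10
  have h12 : ρ 1 (Y * (Y * (Y * Y))) := h1'
  have h13 : ρ X 1 := by
    have h := ρ.mul h11 (ρ.mul h6 (ρ.mul h6 (ρ.refl Y)))
    have e : X * (E * (E * Y)) = X * E * E * Y := by simp [mul_assoc]
    rw [e, hXE2Y] at h
    exact ρ.trans h (ρ.symm h12)
  have h14 : ρ Y 1 := by
    have h := ρ.mul h13 (ρ.refl Y)
    rw [one_mul, hXY] at h; exact ρ.symm h
  have h15 : ρ E 1 := ρ.trans h6 h14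
  have gen : ∀ g : Alpha, ρ (PresentedMonoid.of rel g) 1 := by
    intro g; cases g
    · exact h13
    · exact h14
    · exact h15
  have hlist : ∀ l : List Alpha, ρ (m l) 1 := by
    intro l; induction l with
    | nil => exact ρ.refl 1
    | cons g t ih =>
      have h := ρ.mul (gen g) ih
      rw [mul_one] at h
      rw [m_cons]; exact h
  have all1 : ∀ v : M, ρ v 1 := by
    intro v
    induction v using PresentedMonoid.inductionOn with
    | h w =>
      have hm : m (FreeMonoid.toList w) = PresentedMonoid.mk rel w := by
        simp [m, FreeMonoid.ofList_toList]
      rw [← hm]; exact hlist (FreeMonoid.toList w)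
  refine eq_top_iff.mpr ?_
  intro a b _
  exact ρ.trans (all1 a) (ρ.symm (all1 b))
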